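/- arXiv:1207.0654 — 6 statements merged into one kernel-verified Lean document; each statement's English description precedes it below -/
import Mathlib

section
/- Every configuration reachable from the initial configuration under SSPM transitions is unimodal: there exists an index j such that the configuration is nondecreasing on indices ≤ j and nonincreasing on indices ≥ j. -/
/-- Initial configuration: `n` grains at position 0. -/
def initConf (n : ℕ) : ℤ → ℕ := fun i => if i = 0 then n else 0

/-- Move one grain from column `i` to column `j`. -/
def moveGrain (a : ℤ → ℕ) (i j : ℤ) : ℤ → ℕ :=
  fun k => if k = i then a k - 1 else if k = j then a k + 1 else a k

/-- One sequential SSPM step. -/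
def sspmStep (a b : ℤ → ℕ) : Prop :=
  ∃ i : ℤ, (a (i + 1) + 2 ≤ a i ∧ b = moveGrain a i (i + 1)) ∨
           (a (i - 1) + 2 ≤ a i ∧ b = moveGrain a i (i - 1))

/-- Left rule applicable at column `i`. -/
def appL (a : ℤ → ℕ) (i : ℤ) : Prop := a (i - 1) + 2 ≤ a i

/-- Right rule applicable at column `i`. -/
def appR (a : ℤ → ℕ) (i : ℤ) : Prop := a (i + 1) + 2 ≤ a i

/-- A choice function for a parallel step: `some false` = fire left,
`some true` = fire right, `none` = not fired.  Every column on which some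
rule applies must fire. -/
def ValidChoice (a : ℤ → ℕ) (d : ℤ → Option Bool) : Prop :=
  ∀ i : ℤ, (d i = some false → appL a i) ∧ (d i = some true → appR a i) ∧
    (d i = none → ¬ appL a i ∧ ¬ appR a i)

/-- The configuration resulting from firing all columns according to `d`. -/
def psspmResult (a : ℤ → ℕ) (d : ℤ → Option Bool) : ℤ → ℕ :=
  fun i => (a i - (if d i = none then 0 else 1))
    + (if d (i - 1) = some true then 1 else 0)
    + (if d (i + 1) = some false then 1 else 0)

/-- One parallel PSSPM step. -/
def psspmStep (a b : ℤ → ℕ) : Prop :=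
  ∃ d : ℤ → Option Bool, ValidChoice a d ∧ b = psspmResult a d

/-- Reachability: reflexive transitive closure of a step relation. -/
def Reaches (step : (ℤ → ℕ) → (ℤ → ℕ) → Prop) : (ℤ → ℕ) → (ℤ → ℕ) → Prop :=
  Relation.ReflTransGen step

/-- Fixed point: no rule applies anywhere. -/
def IsFixed (c : ℤ → ℕ) : Prop :=
  ∀ i : ℤ, c i ≤ c (i + 1) + 1 ∧ c i ≤ c (i - 1) + 1

/-- Unimodal configuration: nondecreasing up to some index, nonincreasing after. -/
def Unimodal (c : ℤ → ℕ) : Prop :=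
  ∃ j : ℤ, (∀ i k : ℤ, i ≤ k → k ≤ j → c i ≤ c k) ∧
           (∀ i k : ℤ, j ≤ i → i ≤ k → c k ≤ c i)

/-- Strict lexicographic order, reading positions from left to right. -/
def lexLt (a b : ℤ → ℕ) : Prop :=
  ∃ i : ℤ, a i < b i ∧ ∀ k : ℤ, k < i → a k = b k

/-- Lexicographic order. -/
def lexLe (a b : ℤ → ℕ) : Prop := a = b ∨ lexLt a b

/-- `closeStar a b` (a ◁* b): the nonzero entries of `a - b`, read from left
to right, form a concatenation of pairs (−1 then +1), recorded by an ordered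
list of index pairs. -/
def closeStar (a b : ℤ → ℕ) : Prop :=
  ∃ l : List (ℤ × ℤ),
    (∀ p ∈ l, p.1 < p.2) ∧
    l.Chain' (fun p q => p.2 < q.1) ∧
    ∀ i : ℤ, (a i : ℤ) - (b i : ℤ) =
      (if i ∈ l.map Prod.snd then 1 else 0) - (if i ∈ l.map Prod.fst then 1 else 0)

/-- `closeRel a b` (a ◁ b): `a - b` is exactly −1 at some index `i` and +1 at
some index `j > i`, and 0 elsewhere. -/
def closeRel (a b : ℤ → ℕ) : Prop :=
  ∃ i j : ℤ, i < j ∧ ((a i : ℤ) = (b i : ℤ) - 1) ∧ (a j = b j + 1) ∧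
    ∀ k : ℤ, k ≠ i → k ≠ j → a k = b k

/-!
Track a peak `j` together with the adjacent comparisons on either side of it. A grain can only
fall rightwards from a column at or right of the peak, and the source column stays at least as
high as the target, so every adjacent comparison survives; the only exception is firing the peak
itself when its left neighbour is equally high, after which that neighbour becomes the peak.
Leftward falls are the mirror image.
-/

def UnimodalAt (c : ℤ → ℕ) (j : ℤ) : Prop :=
  (∀ i < j, c i ≤ c (i + 1)) ∧ ∀ i, j ≤ i → c (i + 1) ≤ c i

def reflect (c : ℤ → ℕ) (k : ℤ) : ℕ := c (-k)

theorem reflect_reflect (c : ℤ → ℕ) : reflect (reflect c) = c := by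
  funext k
  simp [reflect]

theorem reflect_moveGrain (a : ℤ → ℕ) (i j : ℤ) :
    reflect (moveGrain a i j) = moveGrain (reflect a) (-i) (-j) := by
  funext k
  simp only [reflect, moveGrain, neg_eq_iff_eq_neg]

theorem UnimodalAt.unimodal {c : ℤ → ℕ} {j : ℤ} (h : UnimodalAt c j) : Unimodal c := by
  refine ⟨j, fun i k hik hkj => ?_, fun i k hji hik => ?_⟩
  · refine monotoneOn_of_le_succ Set.ordConnected_Iic (fun m _ _ hm => ?_)
      (Set.mem_Iic.2 (hik.trans hkj)) hkj hik
    simpa using h.1 m (by simpa using hm)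
  · refine antitoneOn_of_succ_le Set.ordConnected_Ici (fun m _ hm _ => ?_)
      hji (Set.mem_Ici.2 (hji.trans hik)) hik
    simpa using h.2 m hm

theorem unimodalAt_initConf (n : ℕ) : UnimodalAt (initConf n) 0 := by
  constructor <;> intro i hi <;> simp only [initConf] <;> split_ifs <;> omega

theorem unimodalAt_reflect {c : ℤ → ℕ} {j : ℤ} (h : UnimodalAt c j) :
    UnimodalAt (reflect c) (-j) := by
  refine ⟨fun i hi => ?_, fun i hi => ?_⟩
  · simpa [reflect, neg_add_eq_sub] using h.2 (-i - 1) (by omega)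
  · simpa [reflect, neg_add_eq_sub] using h.1 (-i - 1) (by omega)

theorem UnimodalAt.moveGrain_right {a : ℤ → ℕ} {i j : ℤ} (ha : UnimodalAt a j)
    (hi : a (i + 1) + 2 ≤ a i) : ∃ j', UnimodalAt (moveGrain a i (i + 1)) j' := by
  have hji : j ≤ i := by
    by_contra! h
    have := ha.1 i h
    omega
  by_cases hpeak : i = j ∧ a (i - 1) = a i
  · refine ⟨i - 1, fun k hk => ?_, fun k hk => ?_⟩ <;> grind [moveGrain, UnimodalAt]
  · refine ⟨j, fun k hk => ?_, fun k hk => ?_⟩ <;> grind [moveGrain, UnimodalAt]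

theorem UnimodalAt.moveGrain_left {a : ℤ → ℕ} {i j : ℤ} (ha : UnimodalAt a j)
    (hi : a (i - 1) + 2 ≤ a i) : ∃ j', UnimodalAt (moveGrain a i (i - 1)) j' := by
  have hi' : reflect a (-i + 1) + 2 ≤ reflect a (-i) := by
    simpa [reflect, neg_add_eq_sub] using hi
  obtain ⟨j', hj'⟩ := (unimodalAt_reflect ha).moveGrain_right hi'
  refine ⟨-j', ?_⟩
  rw [← reflect_reflect (moveGrain a i (i - 1)), reflect_moveGrain,
    show -(i - 1) = -i + 1 by ring]
  exact unimodalAt_reflect hj'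

theorem exists_unimodalAt_of_sspmStep {a b : ℤ → ℕ} (hab : sspmStep a b)
    (ha : ∃ j, UnimodalAt a j) : ∃ j, UnimodalAt b j := by
  obtain ⟨j, ha⟩ := ha
  obtain ⟨i, ⟨hi, rfl⟩ | ⟨hi, rfl⟩⟩ := hab
  · exact ha.moveGrain_right hi
  · exact ha.moveGrain_left hi

theorem reachable_sspm_unimodal (n : ℕ) (c : ℤ → ℕ)
    (h : Reaches sspmStep (initConf n) c) :
    Unimodal c := by
  suffices ∃ j, UnimodalAt c j from this.elim fun _ hj => hj.unimodal
  induction h with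
  | refl => exact ⟨0, unimodalAt_initConf n⟩
  | tail _ hstep ih => exact exists_unimodalAt_of_sspmStep hstep ih
end

section
/- Consider a sequence of PSSPM transitions c^1 → c^2 → ... → c^k such that some column i satisfies c^t_i = max_j c^t_j for all t (column i remains a highest column), and c^1_i ≤ c^1_{i+1} + 2. Then c^t_i ≤ c^t_{i+1} + 2 for all 1 ≤ t ≤ k. -/
lemma psspm_step_lemma (a : ℤ → ℕ) (d : ℤ → Option Bool) (hd : ValidChoice a d)
    (i : ℤ) (hmax : ∀ j, a j ≤ a i) (h2 : a i ≤ a (i + 1) + 2) :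
    psspmResult a d i ≤ psspmResult a d (i + 1) + 2 := by
  have hL1 : d (i + 1) ≠ some false := by
    intro h
    have h1 := (hd (i + 1)).1 h
    unfold appL at h1
    have e : i + 1 - 1 = i := by ring
    rw [e] at h1
    have := hmax (i + 1)
    omega
  have hR1 : d (i - 1) ≠ some true := by
    intro h
    have h1 := ((hd (i - 1)).2).1 h
    unfold appR at h1
    have e : i - 1 + 1 = i := by ring
    rw [e] at h1
    have := hmax (i - 1)
    omega
  have e1 : i + 1 - 1 = i := by ring
  simp only [psspmResult, e1, if_neg hR1, if_neg hL1]
  rcases h : d (i + 1) with _ | b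
  · have e2 : ((if (none : Option Bool) = none then 0 else 1) : ℕ) = 0 := rfl
    rw [e2]
    omega
  · cases b
    · exact absurd h hL1
    · -- d (i+1) = some true
      have h3 : a (i + 1 + 1) + 2 ≤ a (i + 1) := ((hd (i + 1)).2).1 h
      have e2 : ((if (some true : Option Bool) = none then 0 else 1) : ℕ) = 1 := rfl
      rw [e2]
      have key : a i ≤ a (i + 1) + 1 ∨ d i ≠ none := by
        by_cases hn : d i = none
        · left
          have := ((hd i).2).2 hn
          unfold appR at this
          omega
        · right; exact hn
      rcases key with hk | hk
      · omega
      · rw [if_neg hk]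
        omega

theorem technical_lemma (k : ℕ) (c : ℕ → ℤ → ℕ)
    (hstep : ∀ t : ℕ, t + 1 < k → psspmStep (c t) (c (t + 1)))
    (i : ℤ)
    (hmax : ∀ t : ℕ, t < k → ∀ j : ℤ, c t j ≤ c t i)
    (hinit : c 0 i ≤ c 0 (i + 1) + 2) :
    ∀ t : ℕ, t < k → c t i ≤ c t (i + 1) + 2 := by
  intro t
  induction t with
  | zero => intro _; exact hinit
  | succ n ih =>
    intro h
    have hn : n < k := by omega
    obtain ⟨d, hd, hb⟩ := hstep n (by omega)
    rw [hb]
    exact psspm_step_lemma _ d hd i (hmax n hn) (ih hn)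
end

section
/- Let a be a unimodal configuration from which a PSSPM transition with a choice at the peak column i is possible (i.e., a_{i-1} + 2 ≤ a_i and a_i ≥ a_{i+1} + 2). Let L(a) be the result of the parallel step choosing the left rule at i, and R(a) the result choosing the right rule at i (all other columns fire identically). Then R(a) ◁* L(a); in fact the difference R(a) − L(a) is −1 at position i−1, +1 at position i+1, and 0 elsewhere. -/
/-! Column `i` loses a grain under either choice; only the grain's destination, `i - 1` or
`i + 1`, depends on it. -/

theorem closeRel.closeStar {b c : ℤ → ℕ} (h : closeRel b c) : closeStar b c := by
  obtain ⟨i, j, hij, hi, hj, hrest⟩ := h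
  refine ⟨[(i, j)], by simpa using hij, List.isChain_singleton _, fun k => ?_⟩
  simp only [List.map_cons, List.map_nil, List.mem_singleton]
  rcases eq_or_ne k i with rfl | hki
  · simp [hi, hij.ne]
  rcases eq_or_ne k j with rfl | hkj
  · simp [hj, hki]
  · simp [hrest k hki hkj, hki, hkj]

theorem psspmResult_congr (a : ℤ → ℕ) {d d' : ℤ → Option Bool} {k : ℤ}
    (hfired : d k = none ↔ d' k = none) (hleft : d (k - 1) = d' (k - 1))
    (hright : d (k + 1) = d' (k + 1)) : psspmResult a d k = psspmResult a d' k := by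
  simp only [psspmResult, hfired, hleft, hright]

section Flip

variable (a : ℤ → ℕ) {d d' : ℤ → Option Bool} {i : ℤ}

theorem psspmResult_flip_sub_one (hd : d i = some false) (hd' : d' i = some true)
    (hsame : ∀ j, j ≠ i → d j = d' j) :
    (psspmResult a d' (i - 1) : ℤ) = psspmResult a d (i - 1) - 1 := by
  have hfired : d (i - 1) = d' (i - 1) := hsame _ (by omega)
  have hleft : d (i - 1 - 1) = d' (i - 1 - 1) := hsame _ (by omega)
  simp [psspmResult, hfired, hleft, hd, hd']

theorem psspmResult_flip_add_one (hd : d i = some false) (hd' : d' i = some true)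
    (hsame : ∀ j, j ≠ i → d j = d' j) :
    psspmResult a d' (i + 1) = psspmResult a d (i + 1) + 1 := by
  have hfired : d (i + 1) = d' (i + 1) := hsame _ (by omega)
  have hright : d (i + 1 + 1) = d' (i + 1 + 1) := hsame _ (by omega)
  simp only [psspmResult, add_sub_cancel_right, hd', ↓reduceIte, hfired, hd, Option.some.injEq,
    Bool.false_eq_true, add_zero, hright]
  omega

theorem psspmResult_flip_of_ne (hd : d i = some false) (hd' : d' i = some true)
    (hsame : ∀ j, j ≠ i → d j = d' j) {k : ℤ} (hk₁ : k ≠ i - 1) (hk₂ : k ≠ i + 1) :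
    psspmResult a d' k = psspmResult a d k := by
  refine (psspmResult_congr a ?_ (hsame _ (by omega)) (hsame _ (by omega))).symm
  rcases eq_or_ne k i with rfl | hki
  · simp [hd, hd']
  · rw [hsame k hki]

end Flip

theorem left_right_choice_close_general (a : ℤ → ℕ) (i : ℤ)
    (dL dR : ℤ → Option Bool)
    (hiL : dL i = some false) (hiR : dR i = some true)
    (hsame : ∀ j : ℤ, j ≠ i → dL j = dR j) :
    ((psspmResult a dR (i - 1) : ℤ) = (psspmResult a dL (i - 1) : ℤ) - 1 ∧
     psspmResult a dR (i + 1) = psspmResult a dL (i + 1) + 1 ∧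
     (∀ j : ℤ, j ≠ i - 1 → j ≠ i + 1 → psspmResult a dR j = psspmResult a dL j)) ∧
    closeStar (psspmResult a dR) (psspmResult a dL) := by
  have hleft := psspmResult_flip_sub_one a hiL hiR hsame
  have hright := psspmResult_flip_add_one a hiL hiR hsame
  have hrest : ∀ j, j ≠ i - 1 → j ≠ i + 1 → psspmResult a dR j = psspmResult a dL j :=
    fun _ => psspmResult_flip_of_ne a hiL hiR hsame
  exact ⟨⟨hleft, hright, hrest⟩, closeRel.closeStar ⟨i - 1, i + 1, by omega, hleft, hright, hrest⟩⟩

theorem left_right_choice_close (a : ℤ → ℕ) (huni : Unimodal a) (i : ℤ)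
    (hL : appL a i) (hR : appR a i)
    (dL dR : ℤ → Option Bool)
    (hvL : ValidChoice a dL) (hvR : ValidChoice a dR)
    (hiL : dL i = some false) (hiR : dR i = some true)
    (hsame : ∀ j : ℤ, j ≠ i → dL j = dR j) :
    ((psspmResult a dR (i - 1) : ℤ) = (psspmResult a dL (i - 1) : ℤ) - 1 ∧
     psspmResult a dR (i + 1) = psspmResult a dL (i + 1) + 1 ∧
     (∀ j : ℤ, j ≠ i - 1 → j ≠ i + 1 → psspmResult a dR j = psspmResult a dL j)) ∧
    closeStar (psspmResult a dR) (psspmResult a dL) :=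
  left_right_choice_close_general a i dL dR hiL hiR hsame
end

section
/- Any sequence of PSSPM transitions starting from the initial configuration with n grains at position 0 reaches a fixed point in at most n² steps. -/
/-!
The energy `∑ i, a i ^ 2` equals `n ^ 2` initially and drops by at least the number `F` of
firing columns in every parallel step. Writing `δ` for the change of the configuration,
`∑ b ^ 2 - ∑ a ^ 2 = 2 ∑ δ a + ∑ δ ^ 2`; after reindexing, each firing contributes its height
difference, which is `≤ -2`, to `∑ δ a`, while every column changes by one of `-1, 0, 1, 2`,
which bounds `∑ δ ^ 2` by `3 F`. A configuration that is not fixed has `F ≥ 1`, and fixed points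
are absorbing, so `n ^ 2 + 1` non-fixed configurations in a row are impossible.
-/

open Function Pointwise Finset

theorem Finset.sum_comp_add_of_support_subset {M : Type*} [AddCommMonoid M] {S : Finset ℤ}
    {f : ℤ → M} (k : ℤ) (hf : support f ⊆ S) (hfk : support (fun i => f (i + k)) ⊆ S) :
    ∑ i ∈ S, f (i + k) = ∑ i ∈ S, f i := by
  rw [← finsum_eq_sum_of_support_subset _ hf, ← finsum_eq_sum_of_support_subset _ hfk]
  exact finsum_comp_equiv (Equiv.addRight k)

namespace PSSPM

variable {a b : ℤ → ℕ} {d : ℤ → Option Bool}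

def firesRight (d : ℤ → Option Bool) (i : ℤ) : ℤ := if d i = some true then 1 else 0

def firesLeft (d : ℤ → Option Bool) (i : ℤ) : ℤ := if d i = some false then 1 else 0

theorem firesRight_nonneg (d : ℤ → Option Bool) (i : ℤ) : 0 ≤ firesRight d i := by
  unfold firesRight; split_ifs <;> norm_num

theorem firesLeft_nonneg (d : ℤ → Option Bool) (i : ℤ) : 0 ≤ firesLeft d i := by
  unfold firesLeft; split_ifs <;> norm_num

theorem sq_fires_le (d : ℤ → Option Bool) (i : ℤ) :
    (firesRight d (i - 1) + firesLeft d (i + 1) - firesRight d i - firesLeft d i) ^ 2 ≤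
      firesRight d i + firesLeft d i + firesRight d (i - 1) * 2 + firesLeft d (i + 1) * 2 := by
  unfold firesRight firesLeft
  split_ifs <;> simp_all

theorem two_le_of_fires (hd : ValidChoice a d) {i : ℤ} (hi : d i ≠ none) : 2 ≤ a i := by
  rcases hdi : d i with _ | _ | _
  · exact absurd hdi hi
  · have := (hd i).1 hdi; unfold appL at this; omega
  · have := (hd i).2.1 hdi; unfold appR at this; omega

theorem ne_zero_of_firesRight_ne_zero (hd : ValidChoice a d) {i : ℤ} (hi : firesRight d i ≠ 0) :
    a i ≠ 0 := by
  have := two_le_of_fires hd (i := i) (by unfold firesRight at hi; aesop)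
  omega

theorem ne_zero_of_firesLeft_ne_zero (hd : ValidChoice a d) {i : ℤ} (hi : firesLeft d i ≠ 0) :
    a i ≠ 0 := by
  have := two_le_of_fires hd (i := i) (by unfold firesLeft at hi; aesop)
  omega

theorem firesRight_mul_le (hd : ValidChoice a d) (i : ℤ) :
    firesRight d i * a (i + 1) ≤ firesRight d i * (a i - 2) := by
  unfold firesRight
  split_ifs with h
  · have := (hd i).2.1 h; unfold appR at this; omega
  · simp

theorem firesLeft_mul_le (hd : ValidChoice a d) (i : ℤ) :
    firesLeft d i * a (i - 1) ≤ firesLeft d i * (a i - 2) := by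
  unfold firesLeft
  split_ifs with h
  · have := (hd i).1 h; unfold appL at this; omega
  · simp

theorem psspmResult_eq (hd : ValidChoice a d) (i : ℤ) :
    (psspmResult a d i : ℤ) =
      a i + (firesRight d (i - 1) + firesLeft d (i + 1) - firesRight d i - firesLeft d i) := by
  unfold psspmResult firesRight firesLeft
  have := two_le_of_fires hd (i := i)
  rcases hdi : d i with _ | _ | _ <;> simp [hdi] at this ⊢ <;> split_ifs <;> omega

theorem sum_sq_psspmResult_add_le (hd : ValidChoice a d) {S : Finset ℤ}
    (hS : support a + {-1, 0, 1} ⊆ S) :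
    ∑ i ∈ S, (psspmResult a d i : ℤ) ^ 2 + ∑ i ∈ S, (firesRight d i + firesLeft d i) ≤
      ∑ i ∈ S, (a i : ℤ) ^ 2 := by
  set x := firesRight d
  set y := firesLeft d
  set F := ∑ i ∈ S, (x i + y i)
  have mem : ∀ {i k : ℤ}, a i ≠ 0 → k ∈ ({-1, 0, 1} : Set ℤ) → i + k ∈ S :=
    fun hi hk => hS (Set.add_mem_add hi hk)
  have shiftR : ∀ f : ℤ → ℤ, ∑ i ∈ S, x (i - 1) * f i = ∑ i ∈ S, x i * f (i + 1) := by
    intro f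
    refine Eq.trans ?_ (sum_comp_add_of_support_subset (-1) ?_ ?_)
    · simp [sub_eq_add_neg]
    · intro i hi
      simpa using mem (ne_zero_of_firesRight_ne_zero hd (left_ne_zero_of_mul hi)) (k := 0)
    · intro i hi
      simpa using mem (ne_zero_of_firesRight_ne_zero hd (left_ne_zero_of_mul hi)) (k := 1)
  have shiftL : ∀ f : ℤ → ℤ, ∑ i ∈ S, y (i + 1) * f i = ∑ i ∈ S, y i * f (i - 1) := by
    intro f
    refine Eq.trans ?_ (sum_comp_add_of_support_subset 1 ?_ ?_)
    · simp
    · intro i hi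
      simpa using mem (ne_zero_of_firesLeft_ne_zero hd (left_ne_zero_of_mul hi)) (k := 0)
    · intro i hi
      simpa [← sub_eq_add_neg] using
        mem (ne_zero_of_firesLeft_ne_zero hd (left_ne_zero_of_mul hi)) (k := -1)
  have hsq : ∑ i ∈ S, (psspmResult a d i : ℤ) ^ 2 = ∑ i ∈ S, (a i : ℤ) ^ 2 +
      2 * ∑ i ∈ S, (x (i - 1) * a i + y (i + 1) * a i - (x i + y i) * a i) +
      ∑ i ∈ S, (x (i - 1) + y (i + 1) - x i - y i) ^ 2 := by
    rw [mul_sum, ← sum_add_distrib, ← sum_add_distrib]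
    refine sum_congr rfl fun i _ => ?_
    rw [psspmResult_eq hd]
    ring
  have hlin : ∑ i ∈ S, (x (i - 1) * a i + y (i + 1) * a i - (x i + y i) * a i) ≤ -2 * F := by
    calc _ = ∑ i ∈ S, (x i * a (i + 1) + y i * a (i - 1) - (x i + y i) * a i) := by
          simp only [sum_add_distrib, sum_sub_distrib, shiftR, shiftL]
      _ ≤ ∑ i ∈ S, -2 * (x i + y i) := sum_le_sum fun i _ => by
          linarith [firesRight_mul_le hd i, firesLeft_mul_le hd i]
      _ = -2 * F := by rw [mul_sum]
  have hquad : ∑ i ∈ S, (x (i - 1) + y (i + 1) - x i - y i) ^ 2 ≤ 3 * F := by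
    calc _ ≤ ∑ i ∈ S, (x i + y i + x (i - 1) * 2 + y (i + 1) * 2) :=
          sum_le_sum fun i _ => sq_fires_le d i
      _ = 3 * F := by
          simp only [F, sum_add_distrib, shiftR, shiftL, ← sum_mul]
          ring
  linarith

theorem support_psspmResult_subset (hd : ValidChoice a d) :
    support (psspmResult a d) ⊆ support a + {-1, 0, 1} := by
  intro i hi
  have hb := psspmResult_eq hd i
  have hx := firesRight_nonneg d i
  have hy := firesLeft_nonneg d i
  by_cases ha : a i = 0
  · by_cases hR : firesRight d (i - 1) = 0
    · have hL : firesLeft d (i + 1) ≠ 0 := by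
        intro hL
        have : (psspmResult a d i : ℤ) ≤ 0 := by rw [hb, ha, hR, hL]; push_cast; linarith
        exact hi (by omega)
      exact ⟨i + 1, ne_zero_of_firesLeft_ne_zero hd hL, -1, by simp, by ring⟩
    · exact ⟨i - 1, ne_zero_of_firesRight_ne_zero hd hR, 1, by simp, by ring⟩
  · exact ⟨i, ha, 0, by simp, by ring⟩

/-- `∑ᶠ` is `0` on functions of infinite support, hence the finiteness hypotheses below. -/
noncomputable def energy (a : ℤ → ℕ) : ℕ := ∑ᶠ i, a i ^ 2

theorem energy_initConf (n : ℕ) : energy (initConf n) = n ^ 2 :=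
  (finsum_eq_single _ 0 fun i hi => by simp [initConf, hi]).trans (by simp [initConf])

theorem energy_psspmResult_lt (ha : (support a).Finite) (hd : ValidChoice a d) {i₀ : ℤ}
    (hi₀ : d i₀ ≠ none) : energy (psspmResult a d) < energy a := by
  classical
  set S := (ha.add (Set.toFinite {-1, 0, 1})).toFinset
  have hS : support a + {-1, 0, 1} ⊆ S := by simp [S]
  have hsupp : ∀ b : ℤ → ℕ, support b ⊆ support a + {-1, 0, 1} →
      energy b = ∑ i ∈ S, b i ^ 2 := fun b hb =>
    finsum_eq_sum_of_support_subset _ fun i hi => hS (hb (by simpa using hi))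
  have hfire : 1 ≤ ∑ i ∈ S, (firesRight d i + firesLeft d i) := by
    have hmem : i₀ ∈ S :=
      hS ⟨i₀, by have := two_le_of_fires hd hi₀; simp; omega, 0, by simp, by simp⟩
    refine le_trans ?_ (single_le_sum (fun i _ => add_nonneg (firesRight_nonneg d i)
      (firesLeft_nonneg d i)) hmem)
    unfold firesRight firesLeft
    rcases hd₀ : d i₀ with _ | _ | _ <;> simp_all
  have key := sum_sq_psspmResult_add_le hd hS
  rw [hsupp _ (support_psspmResult_subset hd), hsupp _ (Set.subset_add_left _ (by simp))]
  zify
  linarith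

theorem exists_fires_iff_not_isFixed (hd : ValidChoice a d) :
    (∃ i, d i ≠ none) ↔ ¬IsFixed a := by
  constructor
  · rintro ⟨i, hi⟩ hfix
    have := hfix i
    rcases hdi : d i with _ | _ | _
    · exact hi hdi
    · have := (hd i).1 hdi; unfold appL at this; omega
    · have := (hd i).2.1 hdi; unfold appR at this; omega
  · intro ha
    by_contra! hnone
    refine ha fun i => ?_
    have := (hd i).2.2 (hnone i)
    unfold appL appR at this
    omega

theorem _root_.psspmStep.energy_lt (h : psspmStep a b) (ha : (support a).Finite)
    (hnf : ¬IsFixed a) : energy b < energy a := by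
  obtain ⟨d, hd, rfl⟩ := h
  obtain ⟨i, hi⟩ := (exists_fires_iff_not_isFixed hd).mpr hnf
  exact energy_psspmResult_lt ha hd hi

theorem _root_.psspmStep.support_finite (h : psspmStep a b) (ha : (support a).Finite) :
    (support b).Finite := by
  obtain ⟨d, hd, rfl⟩ := h
  exact (ha.add (Set.toFinite _)).subset (support_psspmResult_subset hd)

theorem _root_.psspmStep.eq_of_isFixed (h : psspmStep a b) (ha : IsFixed a) : b = a := by
  obtain ⟨d, hd, rfl⟩ := h
  have hnone : ∀ i, d i = none := by
    simpa using mt (exists_fires_iff_not_isFixed hd).mp (not_not.mpr ha)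
  funext i
  simp [psspmResult, hnone]

theorem isFixed_of_le {c : ℕ → ℤ → ℕ} (hstep : ∀ t, psspmStep (c t) (c (t + 1))) {s t : ℕ}
    (hst : s ≤ t) (hs : IsFixed (c s)) : IsFixed (c t) := by
  induction t, hst using Nat.le_induction with
  | base => exact hs
  | succ t _ ih => rwa [(hstep t).eq_of_isFixed ih]

end PSSPM

open PSSPM

theorem psspm_reaches_fixed_point_in_n_squared (n : ℕ) (c : ℕ → ℤ → ℕ)
    (h0 : c 0 = initConf n)
    (hstep : ∀ t : ℕ, psspmStep (c t) (c (t + 1))) :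
    IsFixed (c (n ^ 2)) := by
  have hfin : ∀ t, (support (c t)).Finite := by
    intro t
    induction t with
    | zero => exact (Set.finite_singleton 0).subset fun i hi => by simp_all [initConf]
    | succ t ih => exact (hstep t).support_finite ih
  by_contra hnf
  have hdec : ∀ t ≤ n ^ 2, energy (c (t + 1)) < energy (c t) := fun t ht =>
    (hstep t).energy_lt (hfin t) fun hfix => hnf (isFixed_of_le hstep ht hfix)
  have hbound : ∀ t ≤ n ^ 2 + 1, energy (c t) + t ≤ n ^ 2 := by
    intro t ht
    induction t with
    | zero => simp [h0, energy_initConf]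
    | succ t ih =>
      have := hdec t (by omega)
      have := ih (by omega)
      omega
  have := hbound (n ^ 2 + 1) le_rfl
  omega
end

section
/- In a unimodal configuration b reached by PSSPM dynamics from the initial pile, in any single parallel step at most one column can be fired with different rule choices compared to another close configuration c with b ◁* c: it is impossible for two distinct columns u < v to both be fired leftward in b while being fired rightward (or differently) in c. -/
theorem at_most_one_differing_column (b c : ℤ → ℕ)
    (hub : Unimodal b) (huc : Unimodal c)
    (hclose : closeStar b c)
    (db dc : ℤ → Option Bool)
    (hvb : ValidChoice b db) (hvc : ValidChoice c dc) :
    ¬ ∃ u v : ℤ, u < v ∧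
      (∃ x y : Bool, db u = some x ∧ dc u = some y ∧ x ≠ y) ∧
      (∃ x y : Bool, db v = some x ∧ dc v = some y ∧ x ≠ y) := by
  rintro ⟨u, v, huv, ⟨x, y, hbu, hcu, hxy⟩, ⟨x', y', hbv, hcv, hxy'⟩⟩
  obtain ⟨jb, hbinc, hbdec⟩ := hub
  obtain ⟨jc, hcinc, hcdec⟩ := huc
  have hbound : ∀ i : ℤ, -1 ≤ (b i : ℤ) - c i ∧ (b i : ℤ) - c i ≤ 1 := by
    obtain ⟨l, -, -, hl⟩ := hclose
    intro i
    have h := hl i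
    split_ifs at h <;> constructor <;> omega
  have hLb : ∀ i, appL b i → i ≤ jb := by
    intro i h
    by_contra hlt
    push_neg at hlt
    have := hbdec (i - 1) i (by omega) (by omega)
    unfold appL at h; omega
  have hRb : ∀ i, appR b i → jb ≤ i := by
    intro i h
    by_contra hlt
    push_neg at hlt
    have := hbinc i (i + 1) (by omega) (by omega)
    unfold appR at h; omega
  have hLc : ∀ i, appL c i → i ≤ jc := by
    intro i h
    by_contra hlt
    push_neg at hlt
    have := hcdec (i - 1) i (by omega) (by omega)
    unfold appL at h; omega
  have hRc : ∀ i, appR c i → jc ≤ i := by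
    intro i h
    by_contra hlt
    push_neg at hlt
    have := hcinc i (i + 1) (by omega) (by omega)
    unfold appR at h; omega
  have hu : (appL b u ∧ appR c u ∧ u ≤ jb ∧ jc ≤ u) ∨
      (appR b u ∧ appL c u ∧ jb ≤ u ∧ u ≤ jc) := by
    cases x <;> cases y
    · exact absurd rfl hxy
    · have h1 := (hvb u).1 hbu
      have h2 := (hvc u).2.1 hcu
      exact Or.inl ⟨h1, h2, hLb u h1, hRc u h2⟩
    · have h1 := (hvb u).2.1 hbu
      have h2 := (hvc u).1 hcu
      exact Or.inr ⟨h1, h2, hRb u h1, hLc u h2⟩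
    · exact absurd rfl hxy
  have hv : (appL b v ∧ appR c v ∧ v ≤ jb ∧ jc ≤ v) ∨
      (appR b v ∧ appL c v ∧ jb ≤ v ∧ v ≤ jc) := by
    cases x' <;> cases y'
    · exact absurd rfl hxy'
    · have h1 := (hvb v).1 hbv
      have h2 := (hvc v).2.1 hcv
      exact Or.inl ⟨h1, h2, hLb v h1, hRc v h2⟩
    · have h1 := (hvb v).2.1 hbv
      have h2 := (hvc v).1 hcv
      exact Or.inr ⟨h1, h2, hRb v h1, hLc v h2⟩
    · exact absurd rfl hxy'
  have bu := hbound u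
  have bv := hbound v
  rcases hu with ⟨hu1, hu2, hu3, hu4⟩ | ⟨hu1, hu2, hu3, hu4⟩ <;>
    rcases hv with ⟨hv1, hv2, hv3, hv4⟩ | ⟨hv1, hv2, hv3, hv4⟩
  · -- both (left in b, right in c)
    have h1 : b u ≤ b (v - 1) := hbinc u (v - 1) (by omega) (by omega)
    have h2 : c v ≤ c (u + 1) := hcdec (u + 1) v (by omega) (by omega)
    unfold appL at hv1
    unfold appR at hu2
    omega
  · omega
  · omega
  · -- both (right in b, left in c)
    have h1 : b v ≤ b (u + 1) := hbdec (u + 1) v (by omega) (by omega)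
    have h2 : c u ≤ c (v - 1) := hcinc u (v - 1) (by omega) (by omega)
    unfold appR at hu1
    unfold appL at hv2
    omega
end

section
/- Every fixed point of SPM(n) (the one-sided sand pile model) is a nonincreasing staircase with consecutive differences in {0, 1} having at most one plateau: there is at most one index i with c_i = c_{i+1} > 0. -/
/-- Initial one-sided configuration: `n` grains at position 0. -/
def initConfN (n : ℕ) : ℕ → ℕ := fun i => if i = 0 then n else 0

/-- Move one grain from column `i` to column `i+1`. -/
def moveGrainN (a : ℕ → ℕ) (i : ℕ) : ℕ → ℕ :=
  fun k => if k = i then a k - 1 else if k = i + 1 then a k + 1 else a k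

/-- One SPM step: a grain falls from column `i` to `i+1` when the height
difference is at least 2. -/
def spmStep (a b : ℕ → ℕ) : Prop :=
  ∃ i : ℕ, a (i + 1) + 2 ≤ a i ∧ b = moveGrainN a i

/-- Key invariant: on the positive part, the configuration drops by at least one
per step except possibly once. -/
def Jinv (a : ℕ → ℕ) : Prop :=
  ∀ i j : ℕ, i < j → 0 < a j → a j + (j - i - 1) ≤ a i

lemma Jinv_step {a b : ℕ → ℕ} (hJ : Jinv a) (h : spmStep a b) : Jinv b := by
  obtain ⟨m, hm, rfl⟩ := h
  have bm : moveGrainN a m m = a m - 1 := by simp [moveGrainN]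
  have bm1 : moveGrainN a m (m + 1) = a (m + 1) + 1 := by
    simp [moveGrainN, Nat.succ_ne_self]
  have bo : ∀ k, k ≠ m → k ≠ m + 1 → moveGrainN a m k = a k := by
    intro k h1 h2; simp [moveGrainN, h1, h2]
  intro i j hij hj
  by_cases hjm : j = m
  · subst hjm
    rw [bm] at hj ⊢
    rw [bo i (by omega) (by omega)]
    have h1 := hJ i j hij (by omega)
    omega
  · by_cases hjm1 : j = m + 1
    · subst hjm1
      rw [bm1] at hj ⊢
      by_cases him : i = m
      · subst him
        rw [bm]
        omega
      · rw [bo i him (by omega)]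
        have hlt : i < m := by omega
        have h1 := hJ i m hlt (by omega)
        omega
    · rw [bo j hjm hjm1] at hj ⊢
      by_cases him : i = m
      · subst him
        rw [bm]
        have h1 := hJ (i + 1) j (by omega) hj
        omega
      · by_cases him1 : i = m + 1
        · subst him1
          rw [bm1]
          have h1 := hJ (m + 1) j hij hj
          omega
        · rw [bo i him him1]
          exact hJ i j hij hj

lemma Jinv_reach {n : ℕ} {c : ℕ → ℕ}
    (hreach : Relation.ReflTransGen spmStep (initConfN n) c) : Jinv c := by
  induction hreach with
  | refl =>
      intro i j hij hj
      simp only [initConfN] at hj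
      rw [if_neg (by omega : j ≠ 0)] at hj
      omega
  | tail _ step ih => exact Jinv_step ih step

lemma chain_bound {c : ℕ → ℕ} (hfix : ∀ i : ℕ, c i ≤ c (i + 1) + 1) :
    ∀ d k : ℕ, c k ≤ c (k + d) + d := by
  intro d
  induction d with
  | zero => intro k; simp
  | succ d ih =>
      intro k
      have h1 := hfix k
      have h2 := ih (k + 1)
      have : k + 1 + d = k + (d + 1) := by omega
      rw [this] at h2
      omega

theorem spm_fixed_point_staircase (n : ℕ) (c : ℕ → ℕ)
    (hreach : Relation.ReflTransGen spmStep (initConfN n) c)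
    (hfix : ∀ i : ℕ, c i ≤ c (i + 1) + 1) :
    (∀ i : ℕ, c (i + 1) ≤ c i) ∧
    (∀ i j : ℕ, c i = c (i + 1) → 0 < c (i + 1) →
      c j = c (j + 1) → 0 < c (j + 1) → i = j) := by
  have hJ : Jinv c := Jinv_reach hreach
  constructor
  · intro i
    by_cases h : 0 < c (i + 1)
    · have := hJ i (i + 1) (by omega) h
      omega
    · omega
  · intro i j h1 h2 h3 h4
    by_contra hne
    rcases lt_or_gt_of_ne hne with hlt | hlt
    · -- i < j : combine invariant with the fixed-point chain bound
      have hinv := hJ i (j + 1) (by omega) h4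
      have hch := chain_bound hfix (j - i - 1) (i + 1)
      have heq : i + 1 + (j - i - 1) = j := by omega
      rw [heq] at hch
      omega
    · have hinv := hJ j (i + 1) (by omega) h2
      have hch := chain_bound hfix (i - j - 1) (j + 1)
      have heq : j + 1 + (i - j - 1) = i := by omega
      rw [heq] at hch
      omega
end
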